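/- arXiv:2101.00441 — 4 statements merged into one kernel-verified Lean document; each statement's English description precedes it below -/
import Mathlib

section
/- It is impossible to pack n+1 pairwise non-overlapping axis-aligned unit cubes into an axis-aligned box of dimensions (1+ε) × (1+ε) × n, for any ε with 0 ≤ ε < 1 and any positive integer n. -/
/-!
Any two cubes in the box have horizontal corner coordinates in `[0, ε]`, hence less than `1`
apart; interior-disjointness then forces their heights to differ by at least `1`. The `n + 1`
heights lie in `[0, n - 1]`, so their integer parts are `n + 1` distinct elements of
`{0, …, n - 1}`, which is absurd.
-/

/-- The closed axis-aligned unit cube with lower-back-left vertex `x`. -/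
def unitCube (x : Fin 3 → ℝ) : Set (Fin 3 → ℝ) :=
  {p | ∀ k, x k ≤ p k ∧ p k ≤ x k + 1}

/-- The open interior of the unit cube at `x`. -/
def unitCubeInt (x : Fin 3 → ℝ) : Set (Fin 3 → ℝ) :=
  {p | ∀ k, x k < p k ∧ p k < x k + 1}

lemma mem_unitCube_self (x : Fin 3 → ℝ) : x ∈ unitCube x :=
  fun _ => ⟨le_rfl, by linarith⟩

lemma add_one_mem_unitCube (x : Fin 3 → ℝ) : (fun k => x k + 1) ∈ unitCube x :=
  fun _ => ⟨by linarith, le_rfl⟩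

lemma not_disjoint_unitCubeInt {x y : Fin 3 → ℝ} (h : ∀ k, |x k - y k| < 1) :
    ¬ Disjoint (unitCubeInt x) (unitCubeInt y) := by
  have hmid : ∀ z w : Fin 3 → ℝ, (∀ k, |z k - w k| < 1) →
      (fun k => (z k + w k + 1) / 2) ∈ unitCubeInt z := by
    intro z w hzw k
    obtain ⟨hlo, hhi⟩ := abs_sub_lt_iff.mp (hzw k)
    constructor <;> linarith
  refine Set.not_disjoint_iff.mpr ⟨_, hmid x y h, ?_⟩
  have hyx : ∀ k, |y k - x k| < 1 := fun k => abs_sub_comm (x k) (y k) ▸ h k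
  simpa only [add_comm (x _)] using hmid y x hyx

lemma card_le_of_pairwise_one_le_abs_sub {ι : Type*} [Fintype ι] (n : ℕ) (z : ι → ℝ)
    (hz0 : ∀ i, 0 ≤ z i) (hzn : ∀ i, z i < n) (hsep : Pairwise fun i j => 1 ≤ |z i - z j|) :
    Fintype.card ι ≤ n := by
  have hmaps : ∀ i ∈ (Finset.univ : Finset ι), ⌊z i⌋ ∈ Finset.Ico (0 : ℤ) n := fun i _ =>
    Finset.mem_Ico.mpr ⟨Int.floor_nonneg.mpr (hz0 i), Int.floor_lt.mpr (by exact_mod_cast hzn i)⟩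
  have hinj : Set.InjOn (fun i => ⌊z i⌋) (Finset.univ : Finset ι) := by
    intro i _ j _ hij
    by_contra hne
    exact (hsep hne).not_gt (Int.abs_sub_lt_one_of_floor_eq_floor hij)
  simpa using Finset.card_le_card_of_injOn _ hmaps hinj

theorem pigeon_hole_3d_general (n : ℕ) (ε : ℝ) (hε1 : ε < 1) :
    ¬ ∃ pos : Fin (n + 1) → (Fin 3 → ℝ),
      (∀ i, unitCube (pos i) ⊆ {p | (0 ≤ p 0 ∧ p 0 ≤ 1 + ε) ∧ (0 ≤ p 1 ∧ p 1 ≤ 1 + ε) ∧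
                                     (0 ≤ p 2 ∧ p 2 ≤ (n : ℝ))}) ∧
      (∀ i j, i ≠ j → Disjoint (unitCubeInt (pos i)) (unitCubeInt (pos j))) := by
  rintro ⟨pos, hbox, hdisj⟩
  have hlo := fun i => hbox i (mem_unitCube_self (pos i))
  have hhi := fun i => hbox i (add_one_mem_unitCube (pos i))
  have hhoriz : ∀ i j, ∀ k : Fin 2, |pos i k.castSucc - pos j k.castSucc| < 1 := by
    intro i j k
    fin_cases k
    · exact (abs_sub_le_of_nonneg_of_le (hlo i).1.1 (by linarith [(hhi i).1.2])
        (hlo j).1.1 (by linarith [(hhi j).1.2])).trans_lt hε1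
    · exact (abs_sub_le_of_nonneg_of_le (hlo i).2.1.1 (by linarith [(hhi i).2.1.2])
        (hlo j).2.1.1 (by linarith [(hhi j).2.1.2])).trans_lt hε1
  have hsep : Pairwise fun i j => 1 ≤ |pos i 2 - pos j 2| := by
    intro i j hij
    by_contra! hvert
    refine not_disjoint_unitCubeInt (fun k => ?_) (hdisj i j hij)
    exact Fin.lastCases hvert (hhoriz i j) k
  have hcard := card_le_of_pairwise_one_le_abs_sub n (fun i => pos i 2) (fun i => (hlo i).2.2.1)
    (fun i => by linarith [(hhi i).2.2.2]) hsep
  simp at hcard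

/-- It is impossible to pack `n + 1` pairwise interior-disjoint axis-aligned
unit cubes into the box `[0,1+ε] × [0,1+ε] × [0,n]` for `0 ≤ ε < 1`, `n ≥ 1`. -/
theorem pigeon_hole_3d (n : ℕ) (hn : 0 < n) (ε : ℝ) (hε0 : 0 ≤ ε) (hε1 : ε < 1) :
    ¬ ∃ pos : Fin (n + 1) → (Fin 3 → ℝ),
      (∀ i, unitCube (pos i) ⊆ {p | (0 ≤ p 0 ∧ p 0 ≤ 1 + ε) ∧ (0 ≤ p 1 ∧ p 1 ≤ 1 + ε) ∧
                                     (0 ≤ p 2 ∧ p 2 ≤ (n : ℝ))}) ∧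
      (∀ i j, i ≠ j → Disjoint (unitCubeInt (pos i)) (unitCubeInt (pos j))) :=
  pigeon_hole_3d_general n ε hε1
end

section
/- Suppose all box side lengths admissible along an axis of length D and D itself are positive integer multiples of a common divisor g. Then a packing of boxes into the container exists with some placement positions if and only if a packing exists in which, along that axis, every placement coordinate is an integer multiple of g obtained by scaling an integer-coordinate packing of the container of length D/g. In particular, scaling all lengths along one axis by 1/g gives a bijection between packings with coordinates in gℤ and packings of the scaled instance with coordinates in ℤ. -/
/-- A 1-D packing: intervals `[x i, x i + a i] ⊆ [0, D]` with pairwise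
disjoint interiors. -/
def Pack1D (m : ℕ) (D : ℝ) (a : Fin m → ℝ) (x : Fin m → ℝ) : Prop :=
  (∀ i, 0 ≤ x i ∧ x i + a i ≤ D) ∧
  (∀ i j, i ≠ j → x i + a i ≤ x j ∨ x j + a j ≤ x i)

/-!
A packing of intervals of lengths `a i` into `[0, D]` exists iff `∑ a i ≤ D`: disjoint interiors
force the bound by measure, and conversely placing the intervals end to end at the prefix sums
is a packing. When `g` divides `D` and every `a i`, this bound passes to the scaled instance
`a i / g`, `D / g`, whose end-to-end packing has integer coordinates; scaling it back by `g`
gives a packing of the original instance.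
-/

open MeasureTheory Finset

namespace Pack1D

variable {m : ℕ} {D : ℝ} {a x : Fin m → ℝ}

theorem sum_le (h : Pack1D m D a x) (ha : ∀ i, 0 ≤ a i) (hD : 0 ≤ D) : ∑ i, a i ≤ D := by
  obtain ⟨hmem, hsep⟩ := h
  have hdisj : Pairwise (Function.onFun Disjoint fun i => Set.Ioo (x i) (x i + a i)) := by
    intro i j hij
    rw [Function.onFun, Set.disjoint_left]
    rintro t ⟨_, _⟩ ⟨_, _⟩
    rcases hsep i j hij with h | h <;> linarith
  have hsub : (⋃ i, Set.Ioo (x i) (x i + a i)) ⊆ Set.Icc 0 D := by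
    simp only [Set.iUnion_subset_iff]
    exact fun i => Set.Ioo_subset_Icc_self.trans (Set.Icc_subset_Icc (hmem i).1 (hmem i).2)
  have hvol := (measure_mono (μ := volume) hsub).trans_eq Real.volume_Icc
  rw [measure_iUnion hdisj fun _ => measurableSet_Ioo, tsum_fintype] at hvol
  simp only [Real.volume_Ioo, add_sub_cancel_left, sub_zero] at hvol
  rwa [← ENNReal.ofReal_sum_of_nonneg fun i _ => ha i, ENNReal.ofReal_le_ofReal_iff hD] at hvol

theorem of_sum_le (ha : ∀ i, 0 ≤ a i) (hsum : ∑ i, a i ≤ D) :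
    Pack1D m D a fun i => ∑ j ∈ Iio i, a j := by
  refine ⟨fun i => ⟨sum_nonneg fun j _ => ha j, ?_⟩, fun i j hij => ?_⟩
  · rw [sum_Iio_add_eq_sum_Iic]
    exact (sum_le_sum_of_subset_of_nonneg (subset_univ _) fun j _ _ => ha j).trans hsum
  · have hpre : ∀ {i j : Fin m}, i < j → ∑ k ∈ Iio i, a k + a i ≤ ∑ k ∈ Iio j, a k :=
      fun hij => by
        rw [sum_Iio_add_eq_sum_Iic]
        exact sum_le_sum_of_subset_of_nonneg
          (fun k hk => mem_Iio.2 ((mem_Iic.1 hk).trans_lt hij)) fun k _ _ => ha k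
    rcases hij.lt_or_gt with h | h
    exacts [Or.inl (hpre h), Or.inr (hpre h)]

theorem const_mul {c : ℝ} (hc : 0 ≤ c) (h : Pack1D m D a x) :
    Pack1D m (c * D) (fun i => c * a i) fun i => c * x i := by
  obtain ⟨hmem, hsep⟩ := h
  refine ⟨fun i => ⟨mul_nonneg hc (hmem i).1, ?_⟩, fun i j hij => ?_⟩
  · rw [← mul_add]
    exact mul_le_mul_of_nonneg_left (hmem i).2 hc
  · simp only [← mul_add]
    exact (hsep i j hij).imp (mul_le_mul_of_nonneg_left · hc) (mul_le_mul_of_nonneg_left · hc)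

end Pack1D

theorem gcd_discretisation_general (m : ℕ) (D g : ℕ) (a : Fin m → ℕ)
    (hgD : g ∣ D) (hga : ∀ i, g ∣ a i) :
    (∃ x : Fin m → ℝ, Pack1D m (D : ℝ) (fun i => (a i : ℝ)) x) ↔
    (∃ y : Fin m → ℤ,
        Pack1D m ((D / g : ℕ) : ℝ) (fun i => ((a i / g : ℕ) : ℝ)) (fun i => (y i : ℝ)) ∧
        Pack1D m (D : ℝ) (fun i => (a i : ℝ)) (fun i => (g : ℝ) * (y i : ℝ))) := by
  refine ⟨fun ⟨x, hx⟩ => ?_, fun ⟨_, _, hy⟩ => ⟨_, hy⟩⟩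
  have hsum : ∑ i, a i ≤ D := by
    exact_mod_cast hx.sum_le (fun i => Nat.cast_nonneg _) (Nat.cast_nonneg _)
  have hsum_div : ∑ i, a i / g ≤ D / g := by
    rw [← Nat.sum_div fun i _ => hga i]
    exact Nat.div_le_div_right hsum
  have hmul_div : ∀ {n : ℕ}, g ∣ n → (g : ℝ) * ((n / g : ℕ) : ℝ) = n := fun hn => by
    rw [← Nat.cast_mul, Nat.mul_div_cancel' hn]
  have hscaled : Pack1D m ((D / g : ℕ) : ℝ) (fun i => ((a i / g : ℕ) : ℝ))
      fun i => ∑ j ∈ Iio i, ((a j / g : ℕ) : ℝ) :=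
    Pack1D.of_sum_le (fun i => Nat.cast_nonneg _) (by exact_mod_cast hsum_div)
  refine ⟨fun i => ∑ j ∈ Iio i, ((a j / g : ℕ) : ℤ), ?_, ?_⟩ <;>
    simp only [Int.cast_sum, Int.cast_natCast]
  · exact hscaled
  · simpa only [hmul_div hgD, hmul_div (hga _)] using hscaled.const_mul (Nat.cast_nonneg g)

/-- GCD discretisation: if `g` divides `D` and every admissible length `a i`,
then a packing exists iff a packing exists whose coordinates are `g` times the
integer coordinates of a packing of the scaled instance of length `D / g`. -/
theorem gcd_discretisation (m : ℕ) (D g : ℕ) (a : Fin m → ℕ)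
    (hg : 0 < g) (hgD : g ∣ D) (hga : ∀ i, g ∣ a i) (ha : ∀ i, 0 < a i) :
    (∃ x : Fin m → ℝ, Pack1D m (D : ℝ) (fun i => (a i : ℝ)) x) ↔
    (∃ y : Fin m → ℤ,
        Pack1D m ((D / g : ℕ) : ℝ) (fun i => ((a i / g : ℕ) : ℝ)) (fun i => (y i : ℝ)) ∧
        Pack1D m (D : ℝ) (fun i => (a i : ℝ)) (fun i => (g : ℝ) * (y i : ℝ))) :=
  gcd_discretisation_general m D g a hgD hga
end

section
/- If in a one-dimensional packing problem on [0, D] with integer box lengths every placement coordinate may be assumed integral, then every coordinate may further be assumed to lie in the set S of all subset-sums of the multiset of box lengths that are at most D minus the minimum box length; i.e., any integral packing can be transformed (by left-shifting boxes) into a packing where each box's left endpoint is a sum of lengths of boxes placed to its left. -/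
/-!
Put `y i` equal to the total length of the boxes that start strictly left of box `i`. These
boxes are pairwise disjoint and lie in `[0, x i]`, so `y i ≤ x i`; and if box `j` starts left
of box `i`, then the boxes left of `i` include `j` and everything left of `j`, so
`y j + a j ≤ y i`. Hence the shifted boxes are again disjoint, and each `y i` is the subset sum
it is defined as.
-/

/-- An integral 1-D packing: intervals `[x i, x i + a i] ⊆ [0, D]` with
pairwise disjoint interiors, integer coordinates and lengths. -/
def IntPack1D (m : ℕ) (D : ℤ) (a : Fin m → ℤ) (x : Fin m → ℤ) : Prop :=
  (∀ i, 0 ≤ x i ∧ x i + a i ≤ D) ∧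
  (∀ i j, i ≠ j → x i + a i ≤ x j ∨ x j + a j ≤ x i)

open Finset

variable {ι : Type*}

def BoxesDisjoint (a x : ι → ℤ) : Prop :=
  ∀ i j, i ≠ j → x i + a i ≤ x j ∨ x j + a j ≤ x i

namespace BoxesDisjoint

variable {a x : ι → ℤ}

theorem add_le_of_lt (hd : BoxesDisjoint a x) (ha : ∀ i, 0 < a i) {i j : ι} (hji : x j < x i) :
    x j + a j ≤ x i :=
  (hd j i (by rintro rfl; exact hji.false)).resolve_right fun h => by linarith [ha i]

theorem injective (hd : BoxesDisjoint a x) (ha : ∀ i, 0 < a i) : Function.Injective x := by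
  intro i j hij
  by_contra hne
  rcases hd i j hne with h | h <;> linarith [ha i, ha j]

theorem sum_le (hd : BoxesDisjoint a x) (ha : ∀ i, 0 < a i) (T : Finset ι)
    {b c : ℤ} (hbc : b ≤ c) (hb : ∀ j ∈ T, b ≤ x j) (hc : ∀ j ∈ T, x j + a j ≤ c) :
    ∑ j ∈ T, a j ≤ c - b := by
  classical
  induction T using Finset.induction_on_max_value x generalizing c with
  | empty => simpa using hbc
  | insert j T hjT hmax ih =>
    -- the boxes of `T` all start left of `x j`, hence fit into `[b, x j]`
    have hrest : ∑ k ∈ T, a k ≤ x j - b :=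
      ih (hb j (mem_insert_self j T)) (fun k hk => hb k (mem_insert_of_mem hk)) fun k hk =>
        have hkj : k ≠ j := by rintro rfl; exact hjT hk
        hd.add_le_of_lt ha ((hmax k hk).lt_of_ne ((hd.injective ha).ne hkj))
    rw [sum_insert hjT]
    linarith [hc j (mem_insert_self j T)]

end BoxesDisjoint

section leftSum

variable [Fintype ι] (a x : ι → ℤ)

def leftSum (i : ι) : ℤ :=
  ∑ j ∈ univ.filter (fun j => x j < x i), a j

variable {a x}

theorem leftSum_nonneg (ha : ∀ i, 0 ≤ a i) (i : ι) : 0 ≤ leftSum a x i :=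
  sum_nonneg fun j _ => ha j

theorem leftSum_le (hd : BoxesDisjoint a x) (ha : ∀ i, 0 < a i) {b : ℤ}
    (hb : ∀ j, b ≤ x j) (i : ι) : leftSum a x i ≤ x i - b :=
  hd.sum_le ha _ (hb i) (fun j _ => hb j) fun _ hj => hd.add_le_of_lt ha (mem_filter.1 hj).2

theorem leftSum_add_le_of_lt (ha : ∀ i, 0 ≤ a i) {i j : ι} (hji : x j < x i) :
    leftSum a x j + a j ≤ leftSum a x i := by
  classical
  have hsub : insert j (univ.filter fun k => x k < x j) ⊆ univ.filter fun k => x k < x i := by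
    intro k hk
    rcases mem_insert.1 hk with rfl | hk
    · simpa using hji
    · simpa using ((mem_filter.1 hk).2.trans hji)
  calc leftSum a x j + a j = ∑ k ∈ insert j (univ.filter fun k => x k < x j), a k := by
        rw [sum_insert (by simp), add_comm]; rfl
    _ ≤ leftSum a x i := sum_le_sum_of_subset_of_nonneg hsub fun k _ _ => ha k

theorem BoxesDisjoint.leftSum (hd : BoxesDisjoint a x) (ha : ∀ i, 0 < a i) :
    BoxesDisjoint a (leftSum a x) := by
  intro i j hij
  rcases (hd.injective ha).ne hij |>.lt_or_gt with h | h
  · exact Or.inl (leftSum_add_le_of_lt (fun k => (ha k).le) h)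
  · exact Or.inr (leftSum_add_le_of_lt (fun k => (ha k).le) h)

end leftSum

/-- Adaptive discretisation: any integral packing can be left-shifted into a
packing where each box's left endpoint is the sum of the lengths of a set of
boxes placed entirely to its left. -/
theorem leftJustified_discretisation (m : ℕ) (D : ℤ) (a : Fin m → ℤ)
    (ha : ∀ i, 0 < a i) (x : Fin m → ℤ) (hx : IntPack1D m D a x) :
    ∃ y : Fin m → ℤ, IntPack1D m D a y ∧ (∀ i, y i ≤ x i) ∧
      ∀ i, ∃ T : Finset (Fin m),
        (∀ j ∈ T, j ≠ i ∧ y j + a j ≤ y i) ∧ y i = ∑ j ∈ T, a j := by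
  obtain ⟨hbound, hd⟩ := hx
  change BoxesDisjoint a x at hd
  have ha₀ : ∀ i, 0 ≤ a i := fun i => (ha i).le
  have hle : ∀ i, leftSum a x i ≤ x i := fun i => by
    simpa using leftSum_le hd ha (fun j => (hbound j).1) i
  refine ⟨leftSum a x, ⟨fun i => ⟨leftSum_nonneg ha₀ i, ?_⟩, hd.leftSum ha⟩, hle, fun i => ?_⟩
  · linarith [hle i, (hbound i).2]
  refine ⟨univ.filter fun j => x j < x i, fun j hj => ?_, rfl⟩
  have hji := (mem_filter.1 hj).2
  exact ⟨by rintro rfl; exact hji.false, leftSum_add_le_of_lt ha₀ hji⟩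
end

section
/- The optimal value of the space-indexed integer program (without rotations) equals the optimal value of the continuous container loading problem restricted to placements at discretised positions; moreover, when all box dimensions and container dimensions are integers and boxes cannot be rotated, every optimal continuous packing can be converted to an integer-coordinate packing of the same value, so the space-indexed IP with unit discretisation is an exact reformulation of the CLP. -/
/-!
Rounding every coordinate down to its integer part preserves a packing. Two open boxes are
disjoint iff their projections on some axis are disjoint intervals, i.e.
`min (x + a) (y + b) ≤ max x y` on that axis; since `⌊·⌋` is monotone, commutes with `min` and
`max`, and satisfies `⌊x + a⌋ = ⌊x⌋ + a` for integer `a`, this inequality survives flooring.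
The containment constraints `0 ≤ x`, `x + a ≤ D` survive for the same reason.
-/

def boxInt (x a : Fin 3 → ℝ) : Set (Fin 3 → ℝ) :=
  {p | ∀ k, x k < p k ∧ p k < x k + a k}

/-- The subset `s` of boxes is packable with real-valued coordinates. -/
def RealPackable (n : ℕ) (len : Fin n → Fin 3 → ℕ) (D : Fin 3 → ℕ)
    (s : Finset (Fin n)) : Prop :=
  ∃ pos : Fin n → (Fin 3 → ℝ),
    (∀ i ∈ s, ∀ k, 0 ≤ pos i k ∧ pos i k + (len i k : ℝ) ≤ (D k : ℝ)) ∧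
    (∀ i ∈ s, ∀ j ∈ s, i ≠ j →
      Disjoint (boxInt (pos i) (fun k => (len i k : ℝ)))
               (boxInt (pos j) (fun k => (len j k : ℝ))))

/-- The subset `s` of boxes is packable with integer coordinates. -/
def IntPackable (n : ℕ) (len : Fin n → Fin 3 → ℕ) (D : Fin 3 → ℕ)
    (s : Finset (Fin n)) : Prop :=
  ∃ pos : Fin n → (Fin 3 → ℤ),
    (∀ i ∈ s, ∀ k, 0 ≤ pos i k ∧ pos i k + (len i k : ℤ) ≤ (D k : ℤ)) ∧
    (∀ i ∈ s, ∀ j ∈ s, i ≠ j →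
      Disjoint (boxInt (fun k => ((pos i k : ℤ) : ℝ)) (fun k => (len i k : ℝ)))
               (boxInt (fun k => ((pos j k : ℤ) : ℝ)) (fun k => (len j k : ℝ))))

open Set

section Floor

variable {R : Type*} [Field R] [LinearOrder R] [IsStrictOrderedRing R] [FloorRing R]

theorem Int.floor_add_natCast_le_of_add_natCast_le {x : R} {a D : ℕ} (h : x + a ≤ D) :
    ⌊x⌋ + a ≤ D := by
  rw [← Int.floor_add_natCast, ← Int.floor_natCast (R := R) D]
  exact Int.floor_mono h

theorem disjoint_Ioo_floor_of_disjoint_Ioo {x y : R} {a b : ℕ}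
    (h : Disjoint (Ioo x (x + a)) (Ioo y (y + b))) :
    Disjoint (Ioo (⌊x⌋ : R) (⌊x⌋ + a)) (Ioo (⌊y⌋ : R) (⌊y⌋ + b)) := by
  rw [Ioo_disjoint_Ioo] at h ⊢
  have hfloor : ⌊min (x + a) (y + b)⌋ ≤ ⌊max x y⌋ := Int.floor_mono h
  rw [Int.floor_mono.map_min, Int.floor_mono.map_max, Int.floor_add_natCast,
    Int.floor_add_natCast] at hfloor
  exact_mod_cast hfloor

end Floor

theorem boxInt_eq_pi (x a : Fin 3 → ℝ) : boxInt x a = univ.pi fun k => Ioo (x k) (x k + a k) := by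
  ext p
  simp [boxInt]

theorem disjoint_boxInt_floor {x y : Fin 3 → ℝ} {a b : Fin 3 → ℕ}
    (h : Disjoint (boxInt x fun k => (a k : ℝ)) (boxInt y fun k => (b k : ℝ))) :
    Disjoint (boxInt (fun k => (⌊x k⌋ : ℝ)) fun k => (a k : ℝ))
      (boxInt (fun k => (⌊y k⌋ : ℝ)) fun k => (b k : ℝ)) := by
  rw [boxInt_eq_pi, boxInt_eq_pi, disjoint_univ_pi] at h ⊢
  obtain ⟨k, hk⟩ := h
  exact ⟨k, disjoint_Ioo_floor_of_disjoint_Ioo hk⟩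

theorem RealPackable.intPackable {n : ℕ} {len : Fin n → Fin 3 → ℕ} {D : Fin 3 → ℕ}
    {s : Finset (Fin n)} (h : RealPackable n len D s) : IntPackable n len D s := by
  obtain ⟨pos, hbound, hdisj⟩ := h
  refine ⟨fun i k => ⌊pos i k⌋, fun i hi k => ?_, fun i hi j hj hij => ?_⟩
  · obtain ⟨h0, hD⟩ := hbound i hi k
    exact ⟨Int.floor_nonneg.mpr h0, Int.floor_add_natCast_le_of_add_natCast_le hD⟩
  · exact disjoint_boxInt_floor (hdisj i hi j hj hij)

theorem IntPackable.realPackable {n : ℕ} {len : Fin n → Fin 3 → ℕ} {D : Fin 3 → ℕ}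
    {s : Finset (Fin n)} (h : IntPackable n len D s) : RealPackable n len D s := by
  obtain ⟨pos, hbound, hdisj⟩ := h
  refine ⟨fun i k => pos i k, fun i hi k => ?_, hdisj⟩
  obtain ⟨h0, hD⟩ := hbound i hi k
  dsimp only
  exact ⟨by exact_mod_cast h0, by exact_mod_cast hD⟩

theorem realPackable_iff_intPackable {n : ℕ} {len : Fin n → Fin 3 → ℕ} {D : Fin 3 → ℕ}
    {s : Finset (Fin n)} : RealPackable n len D s ↔ IntPackable n len D s :=
  ⟨RealPackable.intPackable, IntPackable.realPackable⟩

theorem space_indexed_exact_general (n : ℕ) (len : Fin n → Fin 3 → ℕ) (D : Fin 3 → ℕ)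
    (w : Fin n → ℝ) :
    (∀ s : Finset (Fin n),
      RealPackable n len D s ↔ IntPackable n len D s) ∧
    {v : ℝ | ∃ s, RealPackable n len D s ∧ v = ∑ i ∈ s, w i} =
      {v : ℝ | ∃ s, IntPackable n len D s ∧ v = ∑ i ∈ s, w i} := by
  refine ⟨fun _ => realPackable_iff_intPackable, ?_⟩
  simp only [realPackable_iff_intPackable]

/-- With integer box and container dimensions and no rotations, a subset of
boxes is continuously packable iff it is packable at integer coordinates;
hence the space-indexed IP with unit discretisation is an exact reformulation
of the container loading problem (the achievable objective values coincide). -/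
theorem space_indexed_exact (n : ℕ) (len : Fin n → Fin 3 → ℕ) (D : Fin 3 → ℕ)
    (hlen : ∀ i k, 0 < len i k) (w : Fin n → ℝ) :
    (∀ s : Finset (Fin n),
      RealPackable n len D s ↔ IntPackable n len D s) ∧
    {v : ℝ | ∃ s, RealPackable n len D s ∧ v = ∑ i ∈ s, w i} =
      {v : ℝ | ∃ s, IntPackable n len D s ∧ v = ∑ i ∈ s, w i} :=
  space_indexed_exact_general n len D w
end
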